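/- arXiv:1803.03561 — 4 statements merged into one kernel-verified Lean document; each statement's English description precedes it below -/
import Mathlib

section
/- Let d ≥ 1, 0 < q ≤ p ≤ 1, 1 < r < ∞, r' = r/(r−1), and let δ ≥ ⌊d(1/q−1)⌋ be an integer. Let g be a locally L^{r'} function on ℝ^d and M ≥ 0, and suppose that for every cube Q ⊂ ℝ^d there exists a polynomial P_Q of degree at most δ such that (|Q| / ‖χ_Q‖_{q,p}) · ( |Q|^{−1} ∫_Q |g(x) − P_Q(x)|^{r'} dx )^{1/r'} ≤ M. Then for every finite family (a_n, Q^n)_{n=0}^m of (q,r,δ)-atoms with associated cubes and every family of scalars (λ_n)_{n=0}^m, the function f = Σ_{n=0}^m λ_n a_n satisfies | ∫_{ℝ^d} f(x) g(x) dx | ≤ M · Σ_{n=0}^m |λ_n| |Q^n|^{−1/q} ‖χ_{Q^n}‖_{q,p}. -/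
open MeasureTheory ENNReal Metric Set
noncomputable section

/-- `ℝ^d` with the Euclidean norm. -/
abbrev Rd (d : ℕ) := EuclideanSpace ℝ (Fin d)

/-- The unit cube `Q_k = k + [0,1)^d` for `k ∈ ℤ^d`. -/
def unitCube (d : ℕ) (k : Fin d → ℤ) : Set (Rd d) :=
  {x | ∀ i, (k i : ℝ) ≤ x i ∧ x i < (k i : ℝ) + 1}

/-- Wiener amalgam quasi-norm `‖f‖_{q,p}` of an `ℝ≥0∞`-valued function on `ℝ^d`:
`( Σ_{k∈ℤ^d} ( ∫_{Q_k} f^q )^{p/q} )^{1/p}`. -/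
def amalgamNorm (d : ℕ) (q p : ℝ) (f : Rd d → ℝ≥0∞) : ℝ≥0∞ :=
  (∑' k : Fin d → ℤ, (∫⁻ x in unitCube d k, f x ^ q) ^ (p / q)) ^ (1 / p)

/-- The closed axis-parallel cube with center `c` and side-length `ℓ`. -/
def cube {d : ℕ} (c : Rd d) (ℓ : ℝ) : Set (Rd d) := {x | ∀ i, |x i - c i| ≤ ℓ / 2}

/-- Evaluation of a (complex) polynomial in `d` variables at a point of `ℝ^d`. -/
def evalPoly {d : ℕ} (P : MvPolynomial (Fin d) ℂ) (x : Rd d) : ℂ :=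
  MvPolynomial.eval (fun i => (x i : ℂ)) P

/-- A `(q,r,δ)`-atom (with `1 < r < ∞`) associated with the cube of center `c` and
side-length `ℓ`: a measurable function supported in the cube, with
`‖a‖_{L^r} ≤ |Q|^{1/r-1/q}` and vanishing moments up to order `δ`. -/
def HardyAtom {d : ℕ} (q r : ℝ) (δ : ℕ) (a : Rd d → ℂ) (c : Rd d) (ℓ : ℝ) : Prop :=
  Measurable a ∧ (∀ x ∉ cube c ℓ, a x = 0) ∧
    (∫⁻ x, (‖a x‖₊ : ℝ≥0∞) ^ r) ^ (1 / r) ≤ ENNReal.ofReal ((ℓ ^ d) ^ (1 / r - 1 / q)) ∧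
    ∀ β : Fin d → ℕ, (∑ i, β i) ≤ δ → ∫ x, (∏ i, (x i : ℂ) ^ β i) * a x = 0

/-!
For an atom `a` on a cube `Q`, the vanishing moments allow `g` to be replaced by `g - P_Q` in
`∫ a g`. Hölder's inequality with `‖a‖_{L^r} ≤ |Q|^{1/r-1/q}` then gives
`|∫ a g| ≤ |Q|^{1/r-1/q} ‖g - P_Q‖_{L^{r'}(Q)}`, which the hypothesis on `g` bounds by
`M |Q|^{-1/q} ‖χ_Q‖_{q,p}`. The triangle inequality over `n` finishes.
-/

section Cubes

variable {d : ℕ}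

lemma cube_eq_preimage_pi (c : Rd d) (ℓ : ℝ) :
    cube c ℓ =
      EuclideanSpace.equiv (Fin d) ℝ ⁻¹' univ.pi fun i => Icc (c i - ℓ / 2) (c i + ℓ / 2) := by
  ext x
  simp only [cube, abs_le, mem_ofPred_eq, mem_preimage, mem_univ_pi, mem_Icc,
    EuclideanSpace.equiv, PiLp.continuousLinearEquiv_apply]
  refine forall_congr' fun i => ?_
  constructor <;> rintro ⟨h₁, h₂⟩ <;> constructor <;> linarith

lemma isCompact_cube (c : Rd d) (ℓ : ℝ) : IsCompact (cube c ℓ) := by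
  rw [cube_eq_preimage_pi]
  exact (EuclideanSpace.equiv (Fin d) ℝ).toHomeomorph.isCompact_preimage.2
    (isCompact_univ_pi fun _ => isCompact_Icc)

lemma measurableSet_cube (c : Rd d) (ℓ : ℝ) : MeasurableSet (cube c ℓ) :=
  (isCompact_cube c ℓ).isClosed.measurableSet

end Cubes

section Amalgam

variable {d : ℕ}

lemma lintegral_unitCube_indicator_one_rpow {q : ℝ} (hq : 0 < q) {s : Set (Rd d)}
    (hs : MeasurableSet s) (k : Fin d → ℤ) :
    ∫⁻ x in unitCube d k, s.indicator (fun _ => (1 : ℝ≥0∞)) x ^ q = volume (s ∩ unitCube d k) := by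
  have hpow : ∀ x, s.indicator (fun _ => (1 : ℝ≥0∞)) x ^ q = s.indicator 1 x := fun x => by
    by_cases hx : x ∈ s <;> simp [hx, ENNReal.zero_rpow_of_pos hq]
  simp_rw [hpow]
  rw [lintegral_indicator_one hs, Measure.restrict_apply hs]

lemma finite_setOf_inter_unitCube_nonempty {s : Set (Rd d)} (hs : Bornology.IsBounded s) :
    {k : Fin d → ℤ | (s ∩ unitCube d k).Nonempty}.Finite := by
  obtain ⟨R, hR⟩ := hs.subset_closedBall 0
  refine (Set.Finite.pi fun _ => Set.finite_Icc ⌈-R - 1⌉ ⌊R⌋).subset ?_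
  rintro k ⟨x, hxs, hxk⟩
  refine mem_univ_pi.2 fun i => ?_
  have hxi : |x i| ≤ R :=
    (Real.norm_eq_abs (x i) ▸ PiLp.norm_apply_le x i).trans (mem_closedBall_zero_iff.1 (hR hxs))
  have := abs_le.1 hxi
  exact ⟨Int.ceil_le.2 (by linarith [hxk i]), Int.le_floor.2 (by linarith [hxk i])⟩

lemma amalgamNorm_indicator_one_ne_top {q p : ℝ} (hq : 0 < q) (hp : 0 < p) {s : Set (Rd d)}
    (hs : MeasurableSet s) (hb : Bornology.IsBounded s) :
    amalgamNorm d q p (s.indicator fun _ => 1) ≠ ∞ := by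
  rw [amalgamNorm]
  refine ENNReal.rpow_ne_top_of_nonneg (by positivity) ?_
  simp_rw [lintegral_unitCube_indicator_one_rpow hq hs]
  set F := (finite_setOf_inter_unitCube_nonempty hb).toFinset
  have hzero : ∀ k ∉ F, volume (s ∩ unitCube d k) ^ (p / q) = 0 := fun k hk => by
    rw [Set.Finite.mem_toFinset, mem_ofPred_eq, Set.not_nonempty_iff_eq_empty] at hk
    rw [hk, measure_empty, ENNReal.zero_rpow_of_pos (by positivity)]
  rw [tsum_eq_sum hzero]
  exact ENNReal.sum_ne_top.2 fun k _ => ENNReal.rpow_ne_top_of_nonneg (by positivity)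
    ((hb.subset inter_subset_left).measure_lt_top).ne

end Amalgam

section Holder

variable {α : Type*} [MeasurableSpace α] {μ : Measure α} {r r' : ℝ} {s : Set α} {a h : α → ℂ}

lemma lintegral_enorm_mul_le_of_support_subset (hrr' : r.HolderConjugate r')
    (ha : AEMeasurable a μ) (hh : AEMeasurable h μ)
    (ha0 : ∀ x ∉ s, a x = 0) :
    ∫⁻ x, ‖a x * h x‖ₑ ∂μ ≤
      (∫⁻ x, ‖a x‖ₑ ^ r ∂μ) ^ (1 / r) * (∫⁻ x in s, ‖h x‖ₑ ^ r' ∂μ) ^ (1 / r') := by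
  have hsupp : Function.support (fun x => ‖a x * h x‖ₑ) ⊆ s := fun x hx => by
    by_contra hxs
    simp [ha0 x hxs] at hx
  calc ∫⁻ x, ‖a x * h x‖ₑ ∂μ = ∫⁻ x in s, ‖a x‖ₑ * ‖h x‖ₑ ∂μ := by
        simp_rw [← enorm_mul]
        exact (setLIntegral_eq_of_support_subset hsupp).symm
    _ ≤ (∫⁻ x in s, ‖a x‖ₑ ^ r ∂μ) ^ (1 / r) * (∫⁻ x in s, ‖h x‖ₑ ^ r' ∂μ) ^ (1 / r') :=
        ENNReal.lintegral_mul_le_Lp_mul_Lq _ hrr' ha.enorm.restrict hh.enorm.restrict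
    _ ≤ _ := by
        gcongr
        · exact hrr'.one_div_nonneg
        · exact Measure.restrict_le_self

lemma integrable_mul_of_support_subset (hrr' : r.HolderConjugate r')
    (ha : AEStronglyMeasurable a μ) (hh : AEStronglyMeasurable h μ) (ha0 : ∀ x ∉ s, a x = 0)
    (har : ∫⁻ x, ‖a x‖ₑ ^ r ∂μ ≠ ∞) (hhr' : ∫⁻ x in s, ‖h x‖ₑ ^ r' ∂μ ≠ ∞) :
    Integrable (fun x => a x * h x) μ := by
  refine ⟨ha.mul hh, ?_⟩
  rw [hasFiniteIntegral_def]
  refine (lintegral_enorm_mul_le_of_support_subset hrr' ha.aemeasurable hh.aemeasurable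
    ha0).trans_lt (ENNReal.mul_lt_top ?_ ?_)
  · exact ENNReal.rpow_lt_top_of_nonneg hrr'.one_div_nonneg har
  · exact ENNReal.rpow_lt_top_of_nonneg hrr'.symm.one_div_nonneg hhr'

lemma setLIntegral_enorm_rpow_ne_top_of_continuous [TopologicalSpace α] {K : Set α}
    (hK : IsCompact K) (hμK : μ K ≠ ∞) (hh : Continuous h) {t : ℝ} (ht : 0 ≤ t) :
    ∫⁻ x in K, ‖h x‖ₑ ^ t ∂μ ≠ ∞ := by
  have hcont : Continuous fun x => ‖h x‖₊ ^ t := (NNReal.continuous_rpow_const ht).comp hh.nnnorm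
  simpa [enorm_eq_nnnorm, ENNReal.coe_rpow_of_nonneg _ ht] using
    (setLIntegral_lt_top_of_isCompact hμK hK hcont).ne

end Holder

namespace HardyAtom

variable {d : ℕ} {q r r' : ℝ} {δ : ℕ} {a : Rd d → ℂ} {c : Rd d} {ℓ : ℝ}

lemma lintegral_enorm_rpow_ne_top (ha : HardyAtom q r δ a c ℓ) (hr : 0 < r) :
    ∫⁻ x, ‖a x‖ₑ ^ r ≠ ∞ := by
  intro htop
  have hbound : (∫⁻ x, ‖a x‖ₑ ^ r) ^ (1 / r) ≤ _ := ha.2.2.1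
  rw [htop, ENNReal.top_rpow_of_pos (by positivity)] at hbound
  exact ENNReal.ofReal_ne_top (top_le_iff.1 hbound)

lemma integrable_mul (ha : HardyAtom q r δ a c ℓ) (hrr' : r.HolderConjugate r') {g : Rd d → ℂ}
    (hg : AEStronglyMeasurable g) (hgloc : ∫⁻ x in cube c ℓ, ‖g x‖ₑ ^ r' ≠ ∞) :
    Integrable fun x => a x * g x :=
  integrable_mul_of_support_subset hrr' ha.1.aestronglyMeasurable hg ha.2.1
    (ha.lintegral_enorm_rpow_ne_top hrr'.pos) hgloc

lemma integrable_mul_of_continuous (ha : HardyAtom q r δ a c ℓ) (hr : 1 < r) {φ : Rd d → ℂ}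
    (hφ : Continuous φ) : Integrable fun x => a x * φ x :=
  have hrr' := Real.HolderConjugate.conjExponent hr
  ha.integrable_mul hrr' hφ.aestronglyMeasurable
    (setLIntegral_enorm_rpow_ne_top_of_continuous (isCompact_cube c ℓ)
      (isCompact_cube c ℓ).measure_lt_top.ne hφ hrr'.symm.nonneg)

lemma integral_mul_evalPoly_eq_zero (ha : HardyAtom q r δ a c ℓ) (hr : 1 < r)
    {P : MvPolynomial (Fin d) ℂ} (hP : P.totalDegree ≤ δ) :
    ∫ x, a x * evalPoly P x = 0 := by
  have hexpand : ∀ x, a x * evalPoly P x =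
      ∑ β ∈ P.support, P.coeff β * (a x * ∏ i, (x i : ℂ) ^ β i) := fun x => by
    rw [evalPoly, MvPolynomial.eval_eq', Finset.mul_sum]
    exact Finset.sum_congr rfl fun β _ => by ring
  simp_rw [hexpand]
  rw [integral_finsetSum _ fun β _ =>
    (ha.integrable_mul_of_continuous hr (by fun_prop)).const_mul _]
  refine Finset.sum_eq_zero fun β hβ => ?_
  have hdeg : ∑ i, β i ≤ δ :=
    (Finsupp.sum_fintype β (fun _ e => e) fun _ => rfl) ▸ (MvPolynomial.le_totalDegree hβ).trans hP
  simp_rw [mul_comm (a _)]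
  rw [integral_const_mul, ha.2.2.2 β hdeg, mul_zero]

end HardyAtom

lemma ENNReal.mul_le_mul_of_div_mul_le {V A X M : ℝ≥0∞} (hV : V ≠ 0) (hA : A ≠ ∞) (hM : M ≠ ∞)
    (h : V / A * X ≤ M) : V * X ≤ M * A := by
  rcases eq_or_ne A 0 with rfl | hA0
  · rw [ENNReal.div_zero hV] at h
    have hX : X = 0 := by
      by_contra hX
      exact hM (top_le_iff.1 (ENNReal.top_mul hX ▸ h))
    simp [hX]
  · calc V * X = V / A * X * A := by rw [mul_right_comm, ENNReal.div_mul_cancel hA0 hA]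
      _ ≤ M * A := by gcongr

lemma ENNReal.rpow_sub_mul_rpow_eq_of_holderConjugate {V : ℝ≥0∞} (hV0 : V ≠ 0) (hV : V ≠ ∞)
    {r r' : ℝ} (hrr' : r.HolderConjugate r') (q : ℝ) (I : ℝ≥0∞) :
    V ^ (1 / r - 1 / q) * I ^ (1 / r') = V ^ (-(1 / q)) * (V * (V⁻¹ * I) ^ (1 / r')) := by
  have hexp : 1 / r - 1 / q = -(1 / q) + (1 + -(1 / r')) := by
    have := hrr'.inv_add_inv_eq_one
    simp only [one_div] at this ⊢
    linarith
  rw [ENNReal.mul_rpow_of_nonneg _ _ hrr'.symm.one_div_nonneg, ENNReal.inv_rpow,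
    ← ENNReal.rpow_neg, hexp, ENNReal.rpow_add _ _ hV0 hV, ENNReal.rpow_add _ _ hV0 hV,
    ENNReal.rpow_one]
  ring

lemma HardyAtom.enorm_integral_mul_le {d : ℕ} {q r r' : ℝ} {δ : ℕ} {a : Rd d → ℂ} {c : Rd d}
    {ℓ : ℝ} (ha : HardyAtom q r δ a c ℓ) (hℓ : 0 < ℓ) (hrr' : r.HolderConjugate r')
    {g : Rd d → ℂ} (hg : Measurable g) (hgloc : ∫⁻ x in cube c ℓ, ‖g x‖ₑ ^ r' ≠ ∞)
    {P : MvPolynomial (Fin d) ℂ} (hP : P.totalDegree ≤ δ) {A M : ℝ≥0∞} (hA : A ≠ ∞)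
    (hM : M ≠ ∞)
    (hPg : ENNReal.ofReal (ℓ ^ d) / A *
        ((ENNReal.ofReal (ℓ ^ d))⁻¹ * ∫⁻ x in cube c ℓ, ‖g x - evalPoly P x‖ₑ ^ r') ^ (1 / r')
          ≤ M) :
    ‖∫ x, a x * g x‖ₑ ≤ M * ENNReal.ofReal ((ℓ ^ d) ^ (-(1 / q))) * A := by
  have hV : 0 < ℓ ^ d := by positivity
  set V := ENNReal.ofReal (ℓ ^ d)
  have hV0 : V ≠ 0 := by simpa [V] using hV
  set I := ∫⁻ x in cube c ℓ, ‖g x - evalPoly P x‖ₑ ^ r'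
  have hPcont : Continuous (evalPoly P) :=
    (MvPolynomial.continuous_eval P).comp (by fun_prop)
  have hsub : ∫ x, a x * g x = ∫ x, a x * (g x - evalPoly P x) := by
    simp_rw [mul_sub]
    rw [integral_sub (ha.integrable_mul hrr' hg.aestronglyMeasurable hgloc)
      (ha.integrable_mul_of_continuous hrr'.lt hPcont),
      ha.integral_mul_evalPoly_eq_zero hrr'.lt hP, sub_zero]
  have haLr : (∫⁻ x, ‖a x‖ₑ ^ r) ^ (1 / r) ≤ V ^ (1 / r - 1 / q) := by
    rw [ENNReal.ofReal_rpow_of_pos hV]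
    exact ha.2.2.1
  calc ‖∫ x, a x * g x‖ₑ = ‖∫ x, a x * (g x - evalPoly P x)‖ₑ := by rw [hsub]
    _ ≤ ∫⁻ x, ‖a x * (g x - evalPoly P x)‖ₑ := enorm_integral_le_lintegral_enorm _
    _ ≤ (∫⁻ x, ‖a x‖ₑ ^ r) ^ (1 / r) * I ^ (1 / r') :=
        lintegral_enorm_mul_le_of_support_subset hrr' ha.1.aemeasurable
          (hg.sub hPcont.measurable).aemeasurable ha.2.1
    _ ≤ V ^ (1 / r - 1 / q) * I ^ (1 / r') := by gcongr
    _ = V ^ (-(1 / q)) * (V * (V⁻¹ * I) ^ (1 / r')) :=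
        ENNReal.rpow_sub_mul_rpow_eq_of_holderConjugate hV0 ENNReal.ofReal_ne_top hrr' q I
    _ ≤ V ^ (-(1 / q)) * (M * A) := by
        gcongr V ^ _ * ?_
        exact ENNReal.mul_le_mul_of_div_mul_le hV0 hA hM hPg
    _ = M * ENNReal.ofReal ((ℓ ^ d) ^ (-(1 / q))) * A := by
        rw [ENNReal.ofReal_rpow_of_pos hV]
        ring

theorem statement5_general {d : ℕ} (q p r r' : ℝ) (hq0 : 0 < q) (hqp : q ≤ p)
    (hr : 1 < r) (hr' : r' = r / (r - 1)) (δ : ℕ)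
    (g : Rd d → ℂ) (hgmeas : Measurable g)
    (hgloc : ∀ (c : Rd d) (ℓ : ℝ), 0 < ℓ →
      (∫⁻ x in cube c ℓ, (‖g x‖₊ : ℝ≥0∞) ^ r') ≠ ∞)
    (M : ℝ)
    (hg : ∀ (c : Rd d) (ℓ : ℝ), 0 < ℓ →
      ∃ P : MvPolynomial (Fin d) ℂ, P.totalDegree ≤ δ ∧
        (ENNReal.ofReal (ℓ ^ d) /
            amalgamNorm d q p ((cube c ℓ).indicator fun _ => 1)) *
          ((ENNReal.ofReal (ℓ ^ d))⁻¹ *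
            ∫⁻ x in cube c ℓ, (‖g x - evalPoly P x‖₊ : ℝ≥0∞) ^ r') ^ (1 / r') ≤
          ENNReal.ofReal M)
    (m : ℕ) (a : Fin (m + 1) → Rd d → ℂ) (c : Fin (m + 1) → Rd d)
    (ℓ : Fin (m + 1) → ℝ) (hℓ : ∀ n, 0 < ℓ n)
    (hatom : ∀ n, HardyAtom q r δ (a n) (c n) (ℓ n)) (lam : Fin (m + 1) → ℂ) :
    (‖∫ x, (∑ n, lam n * a n x) * g x‖₊ : ℝ≥0∞) ≤
      ENNReal.ofReal M *
        ∑ n, (‖lam n‖₊ : ℝ≥0∞) * ENNReal.ofReal ((ℓ n ^ d) ^ (-(1 / q))) *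
          amalgamNorm d q p ((cube (c n) (ℓ n)).indicator fun _ => 1) := by
  have hrr' : r.HolderConjugate r' := (Real.holderConjugate_iff_eq_conjExponent hr).2 hr'
  have hatom_le (n) : ‖∫ x, a n x * g x‖ₑ ≤ ENNReal.ofReal M *
      ENNReal.ofReal ((ℓ n ^ d) ^ (-(1 / q))) *
        amalgamNorm d q p ((cube (c n) (ℓ n)).indicator fun _ => 1) := by
    obtain ⟨P, hP, hPg⟩ := hg (c n) (ℓ n) (hℓ n)
    exact (hatom n).enorm_integral_mul_le (hℓ n) hrr' hgmeas (hgloc _ _ (hℓ n)) hP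
      (amalgamNorm_indicator_one_ne_top hq0 (hq0.trans_le hqp) (measurableSet_cube _ _)
        (isCompact_cube _ _).isBounded) ENNReal.ofReal_ne_top hPg
  have hint (n) : Integrable fun x => lam n * (a n x * g x) :=
    ((hatom n).integrable_mul hrr' hgmeas.aestronglyMeasurable (hgloc _ _ (hℓ n))).const_mul _
  calc ‖∫ x, (∑ n, lam n * a n x) * g x‖ₑ = ‖∑ n, lam n * ∫ x, a n x * g x‖ₑ := by
        simp_rw [Finset.sum_mul, mul_assoc]
        rw [integral_finsetSum _ fun n _ => hint n]
        simp_rw [integral_const_mul]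
    _ ≤ ∑ n, ‖lam n‖ₑ * ‖∫ x, a n x * g x‖ₑ := (enorm_sum_le _ _).trans_eq (by simp_rw [enorm_mul])
    _ ≤ ∑ n, ‖lam n‖ₑ * (ENNReal.ofReal M * ENNReal.ofReal ((ℓ n ^ d) ^ (-(1 / q))) *
          amalgamNorm d q p ((cube (c n) (ℓ n)).indicator fun _ => 1)) := by
        gcongr with n
        exact hatom_le n
    _ = _ := by
        rw [Finset.mul_sum]
        exact Finset.sum_congr rfl fun n _ => by rw [enorm_eq_nnnorm]; ring

/-- Duality estimate: if `g` is locally `L^{r'}` and satisfies the Campanato-type bound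
`(|Q|/‖χ_Q‖_{q,p}) (|Q|^{-1} ∫_Q |g − P_Q|^{r'})^{1/r'} ≤ M` for each cube `Q` (for some
polynomial `P_Q` of degree `≤ δ`), then for every finite atomic sum `f = Σ λ_n a_n` of
`(q,r,δ)`-atoms, `|∫ f g| ≤ M Σ_n |λ_n| |Q^n|^{−1/q} ‖χ_{Q^n}‖_{q,p}`. -/
theorem statement5 {d : ℕ} (hd : 1 ≤ d) (q p r r' : ℝ) (hq0 : 0 < q) (hqp : q ≤ p)
    (hp1 : p ≤ 1) (hr : 1 < r) (hr' : r' = r / (r - 1)) (δ : ℕ)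
    (hδ : ⌊(d : ℝ) * (1 / q - 1)⌋ ≤ (δ : ℤ))
    (g : Rd d → ℂ) (hgmeas : Measurable g)
    (hgloc : ∀ (c : Rd d) (ℓ : ℝ), 0 < ℓ →
      (∫⁻ x in cube c ℓ, (‖g x‖₊ : ℝ≥0∞) ^ r') ≠ ∞)
    (M : ℝ) (hM : 0 ≤ M)
    (hg : ∀ (c : Rd d) (ℓ : ℝ), 0 < ℓ →
      ∃ P : MvPolynomial (Fin d) ℂ, P.totalDegree ≤ δ ∧
        (ENNReal.ofReal (ℓ ^ d) /
            amalgamNorm d q p ((cube c ℓ).indicator fun _ => 1)) *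
          ((ENNReal.ofReal (ℓ ^ d))⁻¹ *
            ∫⁻ x in cube c ℓ, (‖g x - evalPoly P x‖₊ : ℝ≥0∞) ^ r') ^ (1 / r') ≤
          ENNReal.ofReal M)
    (m : ℕ) (a : Fin (m + 1) → Rd d → ℂ) (c : Fin (m + 1) → Rd d)
    (ℓ : Fin (m + 1) → ℝ) (hℓ : ∀ n, 0 < ℓ n)
    (hatom : ∀ n, HardyAtom q r δ (a n) (c n) (ℓ n)) (lam : Fin (m + 1) → ℂ) :
    (‖∫ x, (∑ n, lam n * a n x) * g x‖₊ : ℝ≥0∞) ≤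
      ENNReal.ofReal M *
        ∑ n, (‖lam n‖₊ : ℝ≥0∞) * ENNReal.ofReal ((ℓ n ^ d) ^ (-(1 / q))) *
          amalgamNorm d q p ((cube (c n) (ℓ n)).indicator fun _ => 1) :=
  statement5_general q p r r' hq0 hqp hr hr' δ g hgmeas hgloc M hg m a c ℓ hℓ hatom lam
end
end

section
/- Let d ≥ 1, μ > 0, A > 0 and 0 < q ≤ 1. Let K : ℝ^d × ℝ^d ∖ Δ → ℂ (Δ the diagonal) satisfy |K(x,y) − K(x,z)| ≤ A |y−z|^μ / |x−y|^{d+μ} whenever |x−y| ≥ 2|y−z|. Let Q ⊂ ℝ^d be a cube with center x_Q and side-length ℓ, and let a be an integrable function supported in Q with ∫_{ℝ^d} a(y) dy = 0 and ∫_Q |a(y)| dy ≤ |Q|^{1−1/q}. Then there exists a constant C > 0, depending only on d and μ, such that for every x ∉ 2√d·Q, | ∫_Q K(x,y) a(y) dy | ≤ C A |Q|^{−1/q} ( 𝔐(χ_Q)(x) )^{(d+μ)/d}. -/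
/-!
Since `a` has mean zero, `∫_Q K(x,y) a(y) dy = ∫_Q (K(x,y) - K(x,x_Q)) a(y) dy`. For `x ∉ 2√d·Q`
the distance `R = |x - x_Q|` exceeds the diameter `√d ℓ` of `Q`, so the regularity of `K` bounds
the integrand by `A (√d ℓ / 2)^μ R^{-d-μ} |a(y)|`, and the size condition on `a` gives
`|∫_Q K(x,y) a(y) dy| ≲ A ℓ^{d+μ} R^{-d-μ} |Q|^{-1/q}`. On the other side `Q ⊆ B(x, 2R)`, a ball
of measure at most `(4R)^d`, so `𝔐(χ_Q)(x) ≥ (ℓ / 4R)^d`, whose `(d+μ)/d`-th power is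
`(ℓ / 4R)^{d+μ}`.
-/

open MeasureTheory ENNReal Metric Set
noncomputable section

/-- The Hardy–Littlewood maximal operator (with Euclidean balls). -/
def hlMax {d : ℕ} (f : Rd d → ℝ≥0∞) (x : Rd d) : ℝ≥0∞ :=
  ⨆ (r : ℝ) (_ : 0 < r), (volume (ball x r))⁻¹ * ∫⁻ y in ball x r, f y

section Cube

variable {d : ℕ}

lemma abs_apply_sub_le_dist (x y : Rd d) (i : Fin d) : |x i - y i| ≤ dist x y := by
  simpa only [Real.dist_eq] using PiLp.dist_apply_le x y i

lemma dist_le_of_mem_cube {c y : Rd d} {ℓ : ℝ} (hℓ : 0 ≤ ℓ) (hy : y ∈ cube c ℓ) :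
    dist y c ≤ √d * (ℓ / 2) := by
  have hsum : ∑ i, dist (y i) (c i) ^ 2 ≤ d * (ℓ / 2) ^ 2 := by
    calc ∑ i, dist (y i) (c i) ^ 2 ≤ ∑ _i : Fin d, (ℓ / 2) ^ 2 :=
          Finset.sum_le_sum fun i _ => pow_le_pow_left₀ dist_nonneg (hy i) 2
      _ = d * (ℓ / 2) ^ 2 := by simp
  calc dist y c = √(∑ i, dist (y i) (c i) ^ 2) := EuclideanSpace.dist_eq y c
    _ ≤ √(d * (ℓ / 2) ^ 2) := Real.sqrt_le_sqrt hsum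
    _ = √d * (ℓ / 2) := by rw [Real.sqrt_mul (Nat.cast_nonneg d), Real.sqrt_sq (by positivity)]

lemma sqrt_mul_lt_dist_of_notMem_cube {c x : Rd d} {ℓ : ℝ} (hx : x ∉ cube c (2 * √d * ℓ)) :
    √d * ℓ < dist x c := by
  obtain ⟨i, hi⟩ : ∃ i, 2 * √d * ℓ / 2 < |x i - c i| := by simpa [cube] using hx
  linarith [abs_apply_sub_le_dist x c i]

lemma ball_subset_cube (x : Rd d) (r : ℝ) : ball x r ⊆ cube x (2 * r) := fun y hy i => by
  linarith [abs_apply_sub_le_dist y x i, mem_ball.mp hy]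

lemma cube_eq_preimage (c : Rd d) (ℓ : ℝ) :
    cube c ℓ = (MeasurableEquiv.toLp 2 (Fin d → ℝ)).symm ⁻¹'
      univ.pi fun i => Icc (c i - ℓ / 2) (c i + ℓ / 2) := by
  ext x
  have happly : ∀ i, (MeasurableEquiv.toLp 2 (Fin d → ℝ)).symm x i = x i := fun _ => rfl
  simp only [cube, mem_ofPred_eq, mem_preimage, mem_univ_pi, mem_Icc, abs_sub_le_iff, happly]
  exact forall_congr' fun i => ⟨fun h => ⟨by linarith, by linarith⟩,
    fun h => ⟨by linarith [h.2], by linarith [h.1]⟩⟩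

lemma volume_cube (c : Rd d) {ℓ : ℝ} (hℓ : 0 ≤ ℓ) :
    volume (cube c ℓ) = ENNReal.ofReal (ℓ ^ d) := by
  rw [cube_eq_preimage,
    (EuclideanSpace.volume_preserving_symm_measurableEquiv_toLp (Fin d)).measure_preimage
      (MeasurableSet.univ_pi fun _ => measurableSet_Icc).nullMeasurableSet,
    volume_pi_pi]
  simp [Real.volume_Icc, ← ENNReal.ofReal_pow hℓ]

end Cube

section MaximalFunction

variable {d : ℕ}

lemma volume_div_le_hlMax_indicator {s : Set (Rd d)} (hs : MeasurableSet s) {x : Rd d} {r : ℝ}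
    (hr : 0 < r) (hsr : s ⊆ ball x r) :
    volume s / volume (ball x r) ≤ hlMax (s.indicator fun _ => 1) x := by
  refine le_iSup₂_of_le (f := fun r (_ : 0 < r) =>
    (volume (ball x r))⁻¹ * ∫⁻ y in ball x r, s.indicator (fun _ => 1) y) r hr ?_
  rw [lintegral_indicator hs, setLIntegral_one, Measure.restrict_apply hs,
    inter_eq_self_of_subset_left hsr, ENNReal.div_eq_inv_mul]

lemma ofReal_div_pow_le_hlMax_indicator_cube {c x : Rd d} {ℓ : ℝ} (hℓ : 0 ≤ ℓ)
    (hx : √d * (ℓ / 2) < dist x c) :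
    ENNReal.ofReal ((ℓ / (4 * dist x c)) ^ d) ≤ hlMax ((cube c ℓ).indicator fun _ => 1) x := by
  set R := dist x c
  have hR : 0 < R := lt_of_le_of_lt (by positivity) hx
  have hsub : cube c ℓ ⊆ ball x (2 * R) := fun y hy => by
    rw [mem_ball]
    linarith [dist_triangle y c x, dist_comm c x, dist_le_of_mem_cube hℓ hy]
  have hball : volume (ball x (2 * R)) ≤ ENNReal.ofReal ((4 * R) ^ d) := by
    calc volume (ball x (2 * R)) ≤ volume (cube x (2 * (2 * R))) :=
          measure_mono (ball_subset_cube x _)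
      _ = ENNReal.ofReal ((4 * R) ^ d) := by rw [volume_cube x (by positivity)]; ring_nf
  calc ENNReal.ofReal ((ℓ / (4 * R)) ^ d)
        = ENNReal.ofReal (ℓ ^ d) / ENNReal.ofReal ((4 * R) ^ d) := by
        rw [div_pow, ENNReal.ofReal_div_of_pos (by positivity)]
    _ ≤ volume (cube c ℓ) / volume (ball x (2 * R)) := by
        rw [volume_cube c hℓ]; exact ENNReal.div_le_div_left hball _
    _ ≤ hlMax ((cube c ℓ).indicator fun _ => 1) x :=
        volume_div_le_hlMax_indicator (measurableSet_cube c ℓ) (by positivity) hsub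

end MaximalFunction

lemma norm_setIntegral_mul_le_of_integral_eq_zero {α 𝕜 : Type*} [MeasurableSpace α] [RCLike 𝕜]
    {ν : Measure α} {s : Set α} (hs : MeasurableSet s) {k a : α → 𝕜} {k₀ : 𝕜} {M : ℝ}
    (hM : 0 ≤ M) (ha : IntegrableOn a s ν) (hmean : ∫ y in s, a y ∂ν = 0)
    (hk : ∀ y ∈ s, ‖k y - k₀‖ ≤ M) :
    ‖∫ y in s, k y * a y ∂ν‖ ≤ M * ∫ y in s, ‖a y‖ ∂ν := by
  by_cases hka : IntegrableOn (fun y => k y * a y) s ν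
  swap
  · rw [integral_undef hka, norm_zero]
    exact mul_nonneg hM (integral_nonneg fun _ => norm_nonneg _)
  have hcancel : ∫ y in s, k y * a y ∂ν = ∫ y in s, (k y - k₀) * a y ∂ν := by
    simp_rw [sub_mul]
    rw [integral_sub hka (ha.const_mul k₀), integral_const_mul, hmean, mul_zero, sub_zero]
  rw [hcancel, ← integral_const_mul]
  refine norm_integral_le_of_norm_le (ha.norm.const_mul M)
    ((ae_restrict_mem hs).mono fun y hy => ?_)
  rw [norm_mul]
  exact mul_le_mul_of_nonneg_right (hk y hy) (norm_nonneg _)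

lemma norm_kernel_sub_le_of_dist_le {X E : Type*} [MetricSpace X] [SeminormedAddCommGroup E]
    {K : X → X → E} {A μ β ρ : ℝ}
    (hK : ∀ x y z, x ≠ y → dist x y ≥ 2 * dist y z →
      ‖K x y - K x z‖ ≤ A * dist y z ^ μ / dist x y ^ β)
    (hA : 0 ≤ A) (hμ : 0 ≤ μ) {x y c : X} (hy : dist c y ≤ ρ) (hx : 2 * ρ < dist x c) :
    ‖K x y - K x c‖ ≤ A * ρ ^ μ / dist x c ^ β := by
  have hxc : x ≠ c := dist_pos.mp (by linarith [dist_nonneg (x := c) (y := y)])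
  rw [norm_sub_rev]
  refine (hK x c y hxc (by linarith)).trans ?_
  gcongr

lemma ofReal_pow_rpow_div {t : ℝ} (ht : 0 < t) {n : ℕ} (hn : n ≠ 0) (γ : ℝ) :
    ENNReal.ofReal (t ^ n) ^ (γ / n) = ENNReal.ofReal (t ^ γ) := by
  rw [ENNReal.ofReal_rpow_of_pos (by positivity), ← Real.rpow_natCast, ← Real.rpow_mul ht.le,
    mul_div_cancel₀ γ (Nat.cast_ne_zero.mpr hn)]

lemma mul_rpow_div_rpow_mul_rpow_eq {s ℓ R : ℝ} (hs : 0 ≤ s) (hℓ : 0 < ℓ) (hR : 0 < R)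
    (d : ℕ) (A μ t : ℝ) :
    A * (s * (ℓ / 2)) ^ μ / R ^ ((d : ℝ) + μ) * (ℓ ^ d) ^ (1 - t) =
      (s / 2) ^ μ * 4 ^ ((d : ℝ) + μ) * A * (ℓ ^ d) ^ (-t) * (ℓ / (4 * R)) ^ ((d : ℝ) + μ) := by
  rw [show s * (ℓ / 2) = s / 2 * ℓ by ring, Real.mul_rpow (by positivity) hℓ.le,
    Real.div_rpow hℓ.le (by positivity), Real.mul_rpow (by norm_num) hR.le,
    Real.rpow_add hℓ, Real.rpow_natCast, sub_eq_add_neg, Real.rpow_add (pow_pos hℓ d),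
    Real.rpow_one]
  have : R ^ ((d : ℝ) + μ) ≠ 0 := by positivity
  have : (4 : ℝ) ^ ((d : ℝ) + μ) ≠ 0 := by positivity
  field_simp

/-- Pointwise estimate of a singular integral of an atom away from (the dilate of) its
supporting cube: if `K` satisfies the Hörmander-type regularity bound of exponent `μ`
with constant `A`, and `a` is supported in the cube `Q` with `∫ a = 0` and
`∫_Q |a| ≤ |Q|^{1−1/q}`, then for `x ∉ 2√d·Q`,
`|∫_Q K(x,y) a(y) dy| ≤ C A |Q|^{−1/q} (𝔐 χ_Q (x))^{(d+μ)/d}`,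
with `C` depending only on `d` and `μ`. -/
theorem statement8 {d : ℕ} (hd : 1 ≤ d) (μ : ℝ) (hμ : 0 < μ) :
    ∃ C : ℝ, 0 < C ∧
      ∀ A : ℝ, 0 < A → ∀ q : ℝ, 0 < q → q ≤ 1 →
      ∀ K : Rd d → Rd d → ℂ,
        (∀ x y z : Rd d, x ≠ y → dist x y ≥ 2 * dist y z →
          ‖K x y - K x z‖ ≤ A * dist y z ^ μ / dist x y ^ ((d : ℝ) + μ)) →
      ∀ (c : Rd d) (ℓ : ℝ), 0 < ℓ →
      ∀ a : Rd d → ℂ, IntegrableOn a (cube c ℓ) → (∀ x ∉ cube c ℓ, a x = 0) →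
        (∫ y in cube c ℓ, a y) = 0 →
        (∫ y in cube c ℓ, ‖a y‖) ≤ (ℓ ^ d) ^ (1 - 1 / q) →
      ∀ x ∉ cube c (2 * Real.sqrt d * ℓ),
        (‖∫ y in cube c ℓ, K x y * a y‖₊ : ℝ≥0∞) ≤
          ENNReal.ofReal (C * A) * ENNReal.ofReal ((ℓ ^ d) ^ (-(1 / q))) *
            hlMax ((cube c ℓ).indicator fun _ => 1) x ^ (((d : ℝ) + μ) / d) := by
  have hsqrt : 0 < √d := Real.sqrt_pos.mpr (by exact_mod_cast hd)
  refine ⟨(√d / 2) ^ μ * 4 ^ ((d : ℝ) + μ), by positivity, ?_⟩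
  intro A hA q _ _ K hK c ℓ hℓ a ha _ hmean hsize x hx
  have hfar : √d * ℓ < dist x c := sqrt_mul_lt_dist_of_notMem_cube hx
  have hdiam : 0 < √d * ℓ := mul_pos hsqrt hℓ
  have hkernel : ∀ y ∈ cube c ℓ,
      ‖K x y - K x c‖ ≤ A * (√d * (ℓ / 2)) ^ μ / dist x c ^ ((d : ℝ) + μ) := fun y hy =>
    norm_kernel_sub_le_of_dist_le hK hA.le hμ.le
      (by rw [dist_comm]; exact dist_le_of_mem_cube hℓ.le hy) (by linarith)
  have hintegral := norm_setIntegral_mul_le_of_integral_eq_zero (measurableSet_cube c ℓ)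
    (by positivity) ha hmean hkernel
  have hmax : ENNReal.ofReal ((ℓ / (4 * dist x c)) ^ d) ≤
      hlMax ((cube c ℓ).indicator fun _ => 1) x :=
    ofReal_div_pow_le_hlMax_indicator_cube hℓ.le (by linarith)
  calc (‖∫ y in cube c ℓ, K x y * a y‖₊ : ℝ≥0∞)
      = ENNReal.ofReal ‖∫ y in cube c ℓ, K x y * a y‖ := (ofReal_norm _).symm
    _ ≤ ENNReal.ofReal
          (A * (√d * (ℓ / 2)) ^ μ / dist x c ^ ((d : ℝ) + μ) * (ℓ ^ d) ^ (1 - 1 / q)) :=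
        ENNReal.ofReal_le_ofReal (hintegral.trans (by gcongr))
    _ = ENNReal.ofReal ((√d / 2) ^ μ * 4 ^ ((d : ℝ) + μ) * A) *
          ENNReal.ofReal ((ℓ ^ d) ^ (-(1 / q))) *
          ENNReal.ofReal ((ℓ / (4 * dist x c)) ^ d) ^ (((d : ℝ) + μ) / d) := by
        rw [mul_rpow_div_rpow_mul_rpow_eq hsqrt.le hℓ (by linarith),
          ENNReal.ofReal_mul (by positivity), ENNReal.ofReal_mul (by positivity),
          ofReal_pow_rpow_div (div_pos hℓ (by linarith)) (by omega)]
    _ ≤ _ := by gcongr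
end
end

section
/- Let d ≥ 1, B > 0 and 0 < q ≤ 1. Let K : ℝ^d ∖ {0} → ℂ be continuously differentiable with |∇K(x)| ≤ B |x|^{−(d+1)} for all x ≠ 0. Let Q ⊂ ℝ^d be a cube with center x_Q and side-length ℓ, and let a be an integrable function supported in Q with ∫_{ℝ^d} a(y) dy = 0 and ∫_Q |a(y)| dy ≤ |Q|^{1−1/q}. Then there exists a constant C > 0, depending only on d, such that for every x ∉ 2√d·Q, | ∫_Q K(x−y) a(y) dy | ≤ C B |Q|^{−1/q} ( 𝔐(χ_Q)(x) )^{(d+1)/d}. -/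
open MeasureTheory ENNReal Metric Set
noncomputable section

/-! Since `a` has mean zero, `K (x - c)` may be subtracted from the kernel, and the integrand
becomes `(K (x - y) - K (x - c)) a y`. For `x ∉ 2√d·Q` we have `R := |x - c| > √d ℓ`, so the
ball of radius `√d ℓ / 2` around `x - c`, which contains every `x - y` with `y ∈ Q`, stays at
distance `R / 2` from the origin; the mean value theorem bounds the kernel difference by
`B (R/2)^{-(d+1)} √d ℓ / 2`, and `∫_Q |a| ≤ ℓ^d |Q|^{-1/q}` gives a bound of order
`B (ℓ/R)^{d+1} |Q|^{-1/q}`. On the other side `Q ⊆ B(x, 2R)`, so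
`𝔐 χ_Q (x) ≥ |Q| / |B(x, 2R)| ≃ (ℓ/R)^d`, whose power `(d+1)/d` is `(ℓ/R)^{d+1}`. -/

lemma norm_sub_le_of_norm_fderivWithin_le_rpow {E F : Type*} [NormedAddCommGroup E]
    [NormedSpace ℝ E] [NormedAddCommGroup F] [NormedSpace ℝ F] {K : E → F}
    (hK : DifferentiableOn ℝ K {0}ᶜ) {B p : ℝ} (hB : 0 ≤ B) (hp : 0 ≤ p)
    (hK' : ∀ z, z ≠ 0 → ‖fderivWithin ℝ K {0}ᶜ z‖ ≤ B * ‖z‖ ^ (-p))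
    {u v : E} {ρ r : ℝ} (hr : 0 < r) (hρ : r + ρ ≤ ‖u‖) (hv : v ∈ closedBall u ρ) :
    ‖K v - K u‖ ≤ B * r ^ (-p) * ‖v - u‖ := by
  have hfar : ∀ z ∈ closedBall u ρ, r ≤ ‖z‖ := fun z hz => by
    have := norm_sub_norm_le u z
    rw [mem_closedBall, dist_eq_norm, norm_sub_rev] at hz
    linarith
  have hball : closedBall u ρ ⊆ {0}ᶜ := fun z hz h0 => by
    have := hfar z hz
    rw [h0, norm_zero] at this
    linarith
  refine (convex_closedBall u ρ).norm_image_sub_le_of_norm_hasFDerivWithin_le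
    (fun z hz => ((hK z (hball hz)).hasFDerivWithinAt).mono hball) (fun z hz => ?_)
    (mem_closedBall_self (dist_nonneg.trans hv)) hv
  calc ‖fderivWithin ℝ K {0}ᶜ z‖ ≤ B * ‖z‖ ^ (-p) := hK' z (hball hz)
    _ ≤ B * r ^ (-p) := mul_le_mul_of_nonneg_left
        (Real.rpow_le_rpow_of_nonpos hr (hfar z hz) (neg_nonpos.mpr hp)) hB

lemma norm_integral_mul_le_of_integral_eq_zero {α 𝕜 : Type*} [MeasurableSpace α] [RCLike 𝕜]
    {μ : Measure α} {g a : α → 𝕜} (ha : Integrable a μ) (hg : AEStronglyMeasurable g μ)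
    (h0 : ∫ y, a y ∂μ = 0) {g₀ : 𝕜} {M : ℝ} (hM : ∀ᵐ y ∂μ, ‖g y - g₀‖ ≤ M) :
    ‖∫ y, g y * a y ∂μ‖ ≤ M * ∫ y, ‖a y‖ ∂μ := by
  have hdiff : Integrable (fun y => (g y - g₀) * a y) μ :=
    ha.bdd_mul (hg.sub aestronglyMeasurable_const) hM
  have hcancel : ∫ y, g y * a y ∂μ = ∫ y, (g y - g₀) * a y ∂μ := by
    have : (fun y => g y * a y) = fun y => (g y - g₀) * a y + g₀ * a y := by
      ext y; ring
    rw [this, integral_add hdiff (ha.const_mul g₀), integral_const_mul, h0, mul_zero, add_zero]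
  calc ‖∫ y, g y * a y ∂μ‖ ≤ ∫ y, M * ‖a y‖ ∂μ := by
        rw [hcancel]
        refine norm_integral_le_of_norm_le (ha.norm.const_mul M) ?_
        filter_upwards [hM] with y hy
        rw [norm_mul]
        exact mul_le_mul_of_nonneg_right hy (norm_nonneg _)
    _ = M * ∫ y, ‖a y‖ ∂μ := integral_const_mul M _

section

variable {d : ℕ}

lemma norm_sub_le_of_mem_cube {c w : Rd d} {ℓ : ℝ} (hℓ : 0 ≤ ℓ) (hw : w ∈ cube c ℓ) :
    ‖w - c‖ ≤ Real.sqrt d * (ℓ / 2) := by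
  have hcoord : ∀ i, ‖(w - c) i‖ ^ 2 ≤ (ℓ / 2) ^ 2 := fun i =>
    pow_le_pow_left₀ (norm_nonneg _) (hw i) 2
  calc ‖w - c‖ = Real.sqrt (∑ i, ‖(w - c) i‖ ^ 2) := EuclideanSpace.norm_eq _
    _ ≤ Real.sqrt (∑ _i : Fin d, (ℓ / 2) ^ 2) :=
        Real.sqrt_le_sqrt (Finset.sum_le_sum fun i _ => hcoord i)
    _ = Real.sqrt d * (ℓ / 2) := by
        rw [Finset.sum_const, Finset.card_univ, Fintype.card_fin, nsmul_eq_mul,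
          Real.sqrt_mul (Nat.cast_nonneg d), Real.sqrt_sq (by positivity)]

lemma sqrt_mul_lt_norm_sub_of_notMem_cube {c x : Rd d} {ℓ : ℝ}
    (hx : x ∉ cube c (2 * Real.sqrt d * ℓ)) : Real.sqrt d * ℓ < ‖x - c‖ := by
  simp only [cube, mem_ofPred_eq, not_forall, not_le] at hx
  obtain ⟨i, hi⟩ := hx
  calc Real.sqrt d * ℓ = 2 * Real.sqrt d * ℓ / 2 := by ring
    _ < |x i - c i| := hi
    _ ≤ ‖x - c‖ := PiLp.norm_apply_le (x - c) i

lemma isClosed_cube (c : Rd d) (ℓ : ℝ) : IsClosed (cube c ℓ) := by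
  simp only [cube, Set.ofPred_forall]
  exact isClosed_iInter fun i =>
    isClosed_le ((PiLp.continuous_apply 2 _ i).sub continuous_const).abs continuous_const

lemma cube_subset_closedBall (c : Rd d) {ℓ : ℝ} (hℓ : 0 ≤ ℓ) :
    cube c ℓ ⊆ closedBall c (Real.sqrt d * (ℓ / 2)) := fun _ hw =>
  mem_closedBall_iff_norm.mpr (norm_sub_le_of_mem_cube hℓ hw)

lemma inv_volume_ball_mul_volume_le_hlMax {Q : Set (Rd d)} (hQ : MeasurableSet Q)
    {x : Rd d} {r : ℝ} (hr : 0 < r) (hQr : Q ⊆ ball x r) :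
    (volume (ball x r))⁻¹ * volume Q ≤ hlMax (Q.indicator fun _ => 1) x := by
  have hint : ∫⁻ y in ball x r, Q.indicator (fun _ => 1) y = volume Q := by
    rw [lintegral_indicator hQ, Measure.restrict_restrict hQ, inter_eq_self_of_subset_left hQr,
      setLIntegral_const, one_mul]
  rw [← hint]
  exact le_iSup₂ (f := fun r (_ : 0 < r) =>
    (volume (ball x r))⁻¹ * ∫⁻ y in ball x r, Q.indicator (fun _ => (1 : ℝ≥0∞)) y) r hr

lemma norm_setIntegral_cube_kernel_mul_le {𝕜 : Type*} [RCLike 𝕜] {K : Rd d → 𝕜}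
    (hK : DifferentiableOn ℝ K {0}ᶜ) {B p : ℝ} (hB : 0 ≤ B) (hp : 0 ≤ p)
    (hK' : ∀ z : Rd d, z ≠ 0 → ‖fderivWithin ℝ K {0}ᶜ z‖ ≤ B * ‖z‖ ^ (-p))
    {c x : Rd d} {ℓ : ℝ} (hℓ : 0 ≤ ℓ) (hx : Real.sqrt d * ℓ < ‖x - c‖)
    {a : Rd d → 𝕜} (ha : IntegrableOn a (cube c ℓ)) (h0 : ∫ y in cube c ℓ, a y = 0) :
    ‖∫ y in cube c ℓ, K (x - y) * a y‖ ≤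
      B * (‖x - c‖ / 2) ^ (-p) * (Real.sqrt d * (ℓ / 2)) * ∫ y in cube c ℓ, ‖a y‖ := by
  set R := ‖x - c‖
  set ρ := Real.sqrt d * (ℓ / 2) with hρ
  have hR : 0 < R := (by positivity : 0 ≤ Real.sqrt d * ℓ).trans_lt hx
  have hρR : R / 2 + ρ ≤ R := by linarith
  have hQ : MeasurableSet (cube c ℓ) := (isClosed_cube c ℓ).measurableSet
  have hball : ∀ y ∈ cube c ℓ, x - y ∈ closedBall (x - c) ρ := fun y hy => by
    rw [mem_closedBall_iff_norm', _root_.sub_sub_sub_cancel_left]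
    exact norm_sub_le_of_mem_cube hℓ hy
  have hne : ∀ y ∈ cube c ℓ, x - y ≠ 0 := fun y hy h => by
    have hxc : ‖x - c‖ ≤ ρ := by
      simpa only [sub_eq_zero.mp h] using norm_sub_le_of_mem_cube hℓ hy
    linarith
  have hcont : ContinuousOn (fun y => K (x - y)) (cube c ℓ) :=
    hK.continuousOn.comp (continuous_const.sub continuous_id).continuousOn hne
  have hosc : ∀ y ∈ cube c ℓ, ‖K (x - y) - K (x - c)‖ ≤ B * (R / 2) ^ (-p) * ρ := fun y hy =>
    calc ‖K (x - y) - K (x - c)‖ ≤ B * (R / 2) ^ (-p) * ‖(x - y) - (x - c)‖ :=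
          norm_sub_le_of_norm_fderivWithin_le_rpow hK hB hp hK' (half_pos hR) hρR (hball y hy)
      _ ≤ B * (R / 2) ^ (-p) * ρ := by
          rw [_root_.sub_sub_sub_cancel_left, norm_sub_rev]
          gcongr
          exact norm_sub_le_of_mem_cube hℓ hy
  exact norm_integral_mul_le_of_integral_eq_zero ha (hcont.aestronglyMeasurable hQ) h0
    (ae_restrict_of_forall_mem hQ hosc)

lemma ofReal_div_le_hlMax_indicator_cube (hd : d ≠ 0) {c x : Rd d} {ℓ : ℝ} (hℓ : 0 ≤ ℓ)
    (hx : Real.sqrt d * ℓ < ‖x - c‖) :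
    ENNReal.ofReal (ℓ ^ d / ((2 * ‖x - c‖) ^ d * (volume (ball (0 : Rd d) 1)).toReal)) ≤
      hlMax ((cube c ℓ).indicator fun _ => 1) x := by
  have : Nonempty (Fin d) := ⟨⟨0, Nat.pos_of_ne_zero hd⟩⟩
  have hR : 0 < ‖x - c‖ := (by positivity : 0 ≤ Real.sqrt d * ℓ).trans_lt hx
  have hW : 0 < (volume (ball (0 : Rd d) 1)).toReal :=
    ENNReal.toReal_pos (measure_ball_pos volume 0 one_pos).ne' measure_ball_lt_top.ne
  have hQball : cube c ℓ ⊆ ball x (2 * ‖x - c‖) := (cube_subset_closedBall c hℓ).trans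
    (closedBall_subset_ball' (by rw [dist_comm, dist_eq_norm]; linarith))
  refine le_trans (le_of_eq ?_) (inv_volume_ball_mul_volume_le_hlMax
    (isClosed_cube c ℓ).measurableSet (by positivity) hQball)
  rw [Measure.addHaar_ball volume x (by positivity), finrank_euclideanSpace_fin,
    volume_cube c hℓ, ENNReal.ofReal_div_of_pos (by positivity), ENNReal.ofReal_mul (by positivity),
    ENNReal.ofReal_toReal measure_ball_lt_top.ne, ENNReal.div_eq_inv_mul]

lemma half_rpow_neg_mul_eq (hd : d ≠ 0) {ℓ R W : ℝ} (hℓ : 0 ≤ ℓ) (hR : 0 < R)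
    (hW : 0 < W) :
    (R / 2) ^ (-((d : ℝ) + 1)) * (Real.sqrt d * (ℓ / 2)) * ℓ ^ d =
      Real.sqrt d * 2 ^ (2 * d + 1) * W ^ (((d : ℝ) + 1) / d) *
        (ℓ ^ d / ((2 * R) ^ d * W)) ^ (((d : ℝ) + 1) / d) := by
  have hpow : ∀ s : ℝ, 0 ≤ s → (s ^ d) ^ (((d : ℝ) + 1) / d) = s ^ (d + 1) := fun s hs => by
    rw [← Real.rpow_natCast, ← Real.rpow_mul hs, mul_div_cancel₀ _ (Nat.cast_ne_zero.mpr hd),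
      ← Real.rpow_natCast]
    push_cast; rfl
  have hsucc : (R / 2) ^ ((d : ℝ) + 1) = (R / 2) ^ (d + 1) := by
    rw [← Real.rpow_natCast]; push_cast; rfl
  rw [show ℓ ^ d / ((2 * R) ^ d * W) = (ℓ / (2 * R)) ^ d * W⁻¹ by rw [div_pow]; ring,
    Real.mul_rpow (by positivity) (by positivity), hpow _ (by positivity),
    Real.inv_rpow hW.le, Real.rpow_neg (by positivity), hsucc]
  have hW' : W ^ (((d : ℝ) + 1) / d) ≠ 0 := by positivity
  rw [div_pow, div_pow, mul_pow]
  field_simp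
  ring

end

/-- Pointwise estimate for convolution kernels: if `K` is `C¹` away from the origin with
`|∇K(x)| ≤ B |x|^{−(d+1)}`, and `a` is supported in the cube `Q` with `∫ a = 0` and
`∫_Q |a| ≤ |Q|^{1−1/q}`, then for `x ∉ 2√d·Q`,
`|∫_Q K(x−y) a(y) dy| ≤ C B |Q|^{−1/q} (𝔐 χ_Q (x))^{(d+1)/d}`,
with `C` depending only on `d`. -/
theorem statement12 {d : ℕ} (hd : 1 ≤ d) :
    ∃ C : ℝ, 0 < C ∧
      ∀ B : ℝ, 0 < B → ∀ q : ℝ, 0 < q → q ≤ 1 →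
      ∀ K : Rd d → ℂ, ContDiffOn ℝ 1 K {0}ᶜ →
        (∀ x : Rd d, x ≠ 0 →
          ‖fderivWithin ℝ K {0}ᶜ x‖ ≤ B * ‖x‖ ^ (-((d : ℝ) + 1))) →
      ∀ (c : Rd d) (ℓ : ℝ), 0 < ℓ →
      ∀ a : Rd d → ℂ, IntegrableOn a (cube c ℓ) → (∀ x ∉ cube c ℓ, a x = 0) →
        (∫ y in cube c ℓ, a y) = 0 →
        (∫ y in cube c ℓ, ‖a y‖) ≤ (ℓ ^ d) ^ (1 - 1 / q) →
      ∀ x ∉ cube c (2 * Real.sqrt d * ℓ),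
        (‖∫ y in cube c ℓ, K (x - y) * a y‖₊ : ℝ≥0∞) ≤
          ENNReal.ofReal (C * B) * ENNReal.ofReal ((ℓ ^ d) ^ (-(1 / q))) *
            hlMax ((cube c ℓ).indicator fun _ => 1) x ^ (((d : ℝ) + 1) / d) := by
  have hd0 : d ≠ 0 := Nat.one_le_iff_ne_zero.mp hd
  have hsqrt : 0 < Real.sqrt d := Real.sqrt_pos.mpr (by exact_mod_cast hd)
  set W := (volume (ball (0 : Rd d) 1)).toReal
  have hW : 0 < W := ENNReal.toReal_pos
    (measure_ball_pos volume 0 one_pos).ne' measure_ball_lt_top.ne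
  refine ⟨Real.sqrt d * 2 ^ (2 * d + 1) * W ^ (((d : ℝ) + 1) / d), by positivity, ?_⟩
  intro B hB q _ _ K hK hK' c ℓ hℓ a ha _ h0 habd x hx
  have hxc := sqrt_mul_lt_norm_sub_of_notMem_cube hx
  set R := ‖x - c‖
  have hR : 0 < R := (by positivity : 0 ≤ Real.sqrt d * ℓ).trans_lt hxc
  rw [show (1 - 1 / q) = 1 + -(1 / q) by ring, Real.rpow_add (by positivity), Real.rpow_one]
    at habd
  have hint : ‖∫ y in cube c ℓ, K (x - y) * a y‖ ≤
      Real.sqrt d * 2 ^ (2 * d + 1) * W ^ (((d : ℝ) + 1) / d) * B * (ℓ ^ d) ^ (-(1 / q)) *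
        (ℓ ^ d / ((2 * R) ^ d * W)) ^ (((d : ℝ) + 1) / d) :=
    calc _ ≤ B * (R / 2) ^ (-((d : ℝ) + 1)) * (Real.sqrt d * (ℓ / 2)) *
          (ℓ ^ d * (ℓ ^ d) ^ (-(1 / q))) :=
          (norm_setIntegral_cube_kernel_mul_le (hK.differentiableOn one_ne_zero) hB.le
            (by positivity) hK' hℓ.le hxc ha h0).trans (by gcongr)
      _ = _ := by
          linear_combination B * (ℓ ^ d) ^ (-(1 / q)) * half_rpow_neg_mul_eq hd0 hℓ.le hR hW
  calc (‖∫ y in cube c ℓ, K (x - y) * a y‖₊ : ℝ≥0∞)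
      = ENNReal.ofReal ‖∫ y in cube c ℓ, K (x - y) * a y‖ := (ofReal_norm _).symm
    _ ≤ _ := ENNReal.ofReal_le_ofReal hint
    _ ≤ _ := by
      rw [ENNReal.ofReal_mul (by positivity), ENNReal.ofReal_mul (by positivity),
        ← ENNReal.ofReal_rpow_of_nonneg (x := ℓ ^ d / ((2 * R) ^ d * W)) (by positivity)
          (by positivity)]
      gcongr
      exact ofReal_div_le_hlMax_indicator_cube hd0 hℓ.le hxc
end
end

section
/- Let d ≥ 1, 0 < σ < d, 0 < w ≤ h < ∞ and 0 < u < ∞ with 1/u = 1/w − σ/d. Let (Q^m)_{m≥0} be pairwise distinct dyadic cubes of ℝ^d, each of Lebesgue measure at most 1 (so Q^m has side-length ℓ_m = 2^{−υ_m} with υ_m ≥ 0), and let (δ_m)_{m≥0} be nonnegative reals such that ‖ Σ_{m≥0} δ_m χ_{Q^m} ‖_{w,h} ≤ 1. Then for every x ∈ ℝ^d, Σ_{m≥0} δ_m ℓ_m^σ χ_{Q^m}(x) ≤ C ( Σ_{m≥0} δ_m χ_{Q^m}(x) )^{w/u}, where C = 1/(1 − 2^{σ − d/w}) + 1/(1 −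 2^{−σ}). -/
/-!
Since `Q^m` lies in a unit cube, on which `∫ F^w ≤ 1` for `F = Σ δ_m χ_{Q^m}`, the amalgam bound
forces `δ_m ≤ ℓ_m^{-d/w}`. The cubes containing a fixed point `x` have pairwise different
generations, so for any cut-off `J` the cubes of generation `< J` contribute at most the geometric
sum `Σ_{j<J} 2^{j(d/w-σ)}`, and the others at most `2^{-Jσ} F(x)`. Choosing `2^J ≈ F(x)^{w/d}`
makes both contributions `≲ F(x)^{w/u}`.
-/

open MeasureTheory ENNReal Metric Set
noncomputable section

/-- The dyadic cube `2^{−υ} Π_i [m_i, m_i + 1)` of generation `υ`. -/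
def dyadicCube (d : ℕ) (υ : ℕ) (m : Fin d → ℤ) : Set (Rd d) :=
  {x | ∀ i, (m i : ℝ) / 2 ^ υ ≤ x i ∧ x i < ((m i : ℝ) + 1) / 2 ^ υ}

theorem dyadicCube_eq_preimage (d υ : ℕ) (m : Fin d → ℤ) :
    dyadicCube d υ m = (MeasurableEquiv.toLp 2 (Fin d → ℝ)).symm ⁻¹'
      univ.pi fun i => Ico ((m i : ℝ) / 2 ^ υ) (((m i : ℝ) + 1) / 2 ^ υ) := by
  ext x
  simp [dyadicCube, Set.mem_pi, MeasurableEquiv.coe_toLp_symm]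

theorem measurableSet_dyadicCube (d υ : ℕ) (m : Fin d → ℤ) :
    MeasurableSet (dyadicCube d υ m) := by
  rw [dyadicCube_eq_preimage]
  exact (MeasurableEquiv.toLp 2 (Fin d → ℝ)).symm.measurable
    (MeasurableSet.univ_pi fun _ => measurableSet_Ico)

theorem volume_dyadicCube (d υ : ℕ) (m : Fin d → ℤ) :
    volume (dyadicCube d υ m) = (ENNReal.ofReal (2 ^ υ))⁻¹ ^ d := by
  rw [dyadicCube_eq_preimage,
    (EuclideanSpace.volume_preserving_symm_measurableEquiv_toLp (Fin d)).measure_preimage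
      (MeasurableSet.univ_pi fun _ => measurableSet_Ico).nullMeasurableSet,
    volume_pi_pi, ← ENNReal.ofReal_inv_of_pos (by positivity)]
  simp_rw [Real.volume_Ico, ← sub_div, add_sub_cancel_left, one_div]
  simp

theorem dyadicCube_subset_unitCube (d υ : ℕ) (m : Fin d → ℤ) :
    dyadicCube d υ m ⊆ unitCube d fun i => m i / 2 ^ υ := by
  intro x hx i
  have h2 : (0 : ℝ) < 2 ^ υ := by positivity
  have hlo : ((m i / 2 ^ υ : ℤ) : ℝ) * 2 ^ υ ≤ m i := by
    exact_mod_cast Int.ediv_mul_le (m i) (by positivity)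
  have hhi : (m i : ℝ) + 1 ≤ (((m i / 2 ^ υ : ℤ) : ℝ) + 1) * 2 ^ υ := by
    exact_mod_cast Int.lt_ediv_add_one_mul_self (m i) (by positivity : (0 : ℤ) < 2 ^ υ)
  exact ⟨((le_div_iff₀ h2).mpr hlo).trans (hx i).1,
    (hx i).2.trans_le ((div_le_iff₀ h2).mpr hhi)⟩

theorem eq_floor_of_mem_dyadicCube {d υ : ℕ} {m : Fin d → ℤ} {x : Rd d}
    (hx : x ∈ dyadicCube d υ m) (i : Fin d) : m i = ⌊2 ^ υ * x i⌋ := by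
  have h2 : (0 : ℝ) < 2 ^ υ := by positivity
  have hlo := (div_le_iff₀ h2).mp (hx i).1
  have hhi := (lt_div_iff₀ h2).mp (hx i).2
  rw [eq_comm, Int.floor_eq_iff]
  constructor <;> linarith

theorem eq_of_mem_dyadicCube {d υ : ℕ} {m m' : Fin d → ℤ} {x : Rd d}
    (hx : x ∈ dyadicCube d υ m) (hx' : x ∈ dyadicCube d υ m') : m = m' :=
  funext fun i =>
    (eq_floor_of_mem_dyadicCube hx i).trans (eq_floor_of_mem_dyadicCube hx' i).symm

theorem lintegral_unitCube_rpow_le_one {d : ℕ} {w h : ℝ} (hw : 0 < w) (hh : 0 < h)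
    {F : Rd d → ℝ≥0∞} (hF : amalgamNorm d w h F ≤ 1) (k : Fin d → ℤ) :
    ∫⁻ x in unitCube d k, F x ^ w ≤ 1 := by
  have hsum : ∑' k : Fin d → ℤ, (∫⁻ x in unitCube d k, F x ^ w) ^ (h / w) ≤ 1 := by
    simpa [amalgamNorm, ← ENNReal.rpow_mul, hh.ne'] using ENNReal.rpow_le_rpow hF hh.le
  have hk := (ENNReal.le_tsum k).trans hsum
  exact (ENNReal.rpow_le_rpow_iff (div_pos hh hw)).mp (hk.trans_eq (ENNReal.one_rpow _).symm)

theorem le_two_pow_rpow_of_amalgamNorm_le_one {d : ℕ} {w h : ℝ} (hw : 0 < w) (hh : 0 < h)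
    {F : Rd d → ℝ≥0∞} (hF : amalgamNorm d w h F ≤ 1) {υ : ℕ} {m : Fin d → ℤ} {c : ℝ≥0∞}
    (hc : ∀ y ∈ dyadicCube d υ m, c ≤ F y) :
    c ≤ ENNReal.ofReal (((2 : ℝ) ^ υ) ^ ((d : ℝ) / w)) := by
  have hvol : c ^ w * volume (dyadicCube d υ m) ≤ 1 :=
    calc c ^ w * volume (dyadicCube d υ m) = ∫⁻ _ in dyadicCube d υ m, c ^ w :=
          (setLIntegral_const _ _).symm
      _ ≤ ∫⁻ y in dyadicCube d υ m, F y ^ w :=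
          setLIntegral_mono' (measurableSet_dyadicCube d υ m) fun y hy =>
            ENNReal.rpow_le_rpow (hc y hy) hw.le
      _ ≤ ∫⁻ y in unitCube d fun i => m i / 2 ^ υ, F y ^ w :=
          lintegral_mono_set (dyadicCube_subset_unitCube d υ m)
      _ ≤ 1 := lintegral_unitCube_rpow_le_one hw hh hF _
  rw [volume_dyadicCube, ← ENNReal.le_inv_iff_mul_le, ← ENNReal.inv_pow, inv_inv] at hvol
  rw [← ENNReal.rpow_le_rpow_iff hw, ENNReal.ofReal_rpow_of_pos (by positivity),
    ← Real.rpow_mul (by positivity), div_mul_cancel₀ _ hw.ne', Real.rpow_natCast,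
    ENNReal.ofReal_pow (by positivity)]
  exact hvol

theorem geom_sum_two_pow_rpow_le {β : ℝ} (hβ : 0 < β) (n : ℕ) :
    ∑ j ∈ Finset.range (n + 1), ((2 : ℝ) ^ j) ^ β ≤ ((2 : ℝ) ^ n) ^ β / (1 - 2 ^ (-β)) := by
  have hr : 1 < (2 : ℝ) ^ β := Real.one_lt_rpow one_lt_two hβ
  simp_rw [← Real.rpow_natCast_mul zero_le_two, mul_comm _ β, Real.rpow_mul_natCast zero_le_two,
    Real.rpow_neg zero_le_two]
  rw [geom_sum_eq hr.ne', le_div_iff₀ (by simp [inv_lt_one_of_one_lt₀ hr]), div_mul_eq_mul_div,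
    div_le_iff₀ (by linarith), pow_succ]
  field_simp
  nlinarith [pow_pos (zero_lt_one.trans hr) n]

theorem one_le_one_div_one_sub_two_rpow_neg {σ : ℝ} (hσ : 0 < σ) :
    1 ≤ 1 / (1 - (2 : ℝ) ^ (-σ)) := by
  have h0 : 0 < (2 : ℝ) ^ (-σ) := by positivity
  have h1 : (2 : ℝ) ^ (-σ) < 1 := Real.rpow_lt_one_of_one_lt_of_neg one_lt_two (by linarith)
  rw [le_div_iff₀ (by linarith)]
  linarith

theorem geom_sum_add_tail_le {σ α s : ℝ} (hσ : 0 < σ) (hσα : σ < α) (hs : 0 < s) {n : ℕ}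
    (hn : (2 : ℝ) ^ n ≤ s ^ (1 / α)) (hn' : s ^ (1 / α) < 2 ^ (n + 1)) :
    ∑ j ∈ Finset.range (n + 1), ((2 : ℝ) ^ j) ^ (α - σ) + ((2 : ℝ) ^ (n + 1))⁻¹ ^ σ * s ≤
      (1 / (1 - (2 : ℝ) ^ (σ - α)) + 1 / (1 - (2 : ℝ) ^ (-σ))) * s ^ (1 - σ / α) := by
  have hα : 0 < α := hσ.trans hσα
  have hT : 0 < s ^ (1 / α) := by positivity
  have hden : 0 < 1 - (2 : ℝ) ^ (σ - α) :=
    sub_pos.mpr (Real.rpow_lt_one_of_one_lt_of_neg one_lt_two (by linarith))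
  have hgeom : ∑ j ∈ Finset.range (n + 1), ((2 : ℝ) ^ j) ^ (α - σ) ≤
      s ^ (1 - σ / α) / (1 - (2 : ℝ) ^ (σ - α)) :=
    calc ∑ j ∈ Finset.range (n + 1), ((2 : ℝ) ^ j) ^ (α - σ)
        ≤ ((2 : ℝ) ^ n) ^ (α - σ) / (1 - 2 ^ (σ - α)) := by
          simpa only [neg_sub] using geom_sum_two_pow_rpow_le (sub_pos.mpr hσα) n
      _ ≤ (s ^ (1 / α)) ^ (α - σ) / (1 - 2 ^ (σ - α)) := by
          gcongr
      _ = s ^ (1 - σ / α) / (1 - (2 : ℝ) ^ (σ - α)) := by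
          rw [← Real.rpow_mul hs.le]
          congr 2
          field_simp
  have htail : ((2 : ℝ) ^ (n + 1))⁻¹ ^ σ * s ≤ s ^ (1 - σ / α) :=
    calc ((2 : ℝ) ^ (n + 1))⁻¹ ^ σ * s ≤ (s ^ (1 / α))⁻¹ ^ σ * s := by gcongr
      _ = s ^ (1 - σ / α) := by
          rw [Real.inv_rpow hT.le, ← Real.rpow_mul hs.le, ← Real.rpow_neg hs.le,
            ← Real.rpow_add_one hs.ne']
          congr 1
          ring
  have hC := one_le_one_div_one_sub_two_rpow_neg hσ
  have hpow : 0 ≤ s ^ (1 - σ / α) := by positivity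
  calc _ ≤ s ^ (1 - σ / α) / (1 - (2 : ℝ) ^ (σ - α)) + s ^ (1 - σ / α) :=
        add_le_add hgeom htail
    _ ≤ _ := by rw [add_mul, div_mul_eq_mul_div, one_mul]; nlinarith

theorem tsum_mul_inv_two_pow_rpow_le_add {ι : Type*} {g : ι → ℕ} (hg : Function.Injective g)
    {a : ι → ℝ≥0∞} {σ α : ℝ} (hσ : 0 ≤ σ)
    (ha : ∀ i, a i ≤ ENNReal.ofReal (((2 : ℝ) ^ g i) ^ α)) (J : ℕ) :
    ∑' i, a i * ENNReal.ofReal (((2 : ℝ) ^ g i)⁻¹ ^ σ) ≤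
      ENNReal.ofReal (∑ j ∈ Finset.range J, ((2 : ℝ) ^ j) ^ (α - σ)) +
        ENNReal.ofReal (((2 : ℝ) ^ J)⁻¹ ^ σ) * ∑' i, a i := by
  set head : ℕ → ℝ≥0∞ :=
    (↑(Finset.range J) : Set ℕ).indicator fun j => ENNReal.ofReal (((2 : ℝ) ^ j) ^ (α - σ))
  have hterm : ∀ i, a i * ENNReal.ofReal (((2 : ℝ) ^ g i)⁻¹ ^ σ) ≤
      head (g i) + ENNReal.ofReal (((2 : ℝ) ^ J)⁻¹ ^ σ) * a i := by
    intro i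
    by_cases hi : g i < J
    · refine le_add_right ?_
      calc a i * ENNReal.ofReal (((2 : ℝ) ^ g i)⁻¹ ^ σ)
          ≤ ENNReal.ofReal (((2 : ℝ) ^ g i) ^ α) * ENNReal.ofReal (((2 : ℝ) ^ g i)⁻¹ ^ σ) :=
            mul_le_mul_left (ha i) _
        _ = head (g i) := by
            rw [← ENNReal.ofReal_mul (by positivity), Real.inv_rpow (by positivity),
              ← div_eq_mul_inv, ← Real.rpow_sub (by positivity)]
            simp [head, hi]
    · refine le_add_left ?_
      rw [mul_comm]
      gcongr
      · norm_num
      · exact not_lt.mp hi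
  calc ∑' i, a i * ENNReal.ofReal (((2 : ℝ) ^ g i)⁻¹ ^ σ)
      ≤ ∑' i, head (g i) + ENNReal.ofReal (((2 : ℝ) ^ J)⁻¹ ^ σ) * ∑' i, a i := by
        rw [← ENNReal.tsum_mul_left, ← ENNReal.tsum_add]
        exact ENNReal.tsum_le_tsum hterm
    _ ≤ ∑' j, head j + ENNReal.ofReal (((2 : ℝ) ^ J)⁻¹ ^ σ) * ∑' i, a i := by
        gcongr
        exact ENNReal.tsum_comp_le_tsum_of_injective hg head
    _ = _ := by
        rw [ENNReal.ofReal_sum_of_nonneg (fun j _ => by positivity), sum_eq_tsum_indicator]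

theorem tsum_mul_inv_two_pow_rpow_le {ι : Type*} {g : ι → ℕ} (hg : Function.Injective g)
    {a : ι → ℝ≥0∞} {σ α : ℝ} (hσ : 0 < σ) (hσα : σ < α)
    (ha : ∀ i, a i ≤ ENNReal.ofReal (((2 : ℝ) ^ g i) ^ α)) :
    ∑' i, a i * ENNReal.ofReal (((2 : ℝ) ^ g i)⁻¹ ^ σ) ≤
      ENNReal.ofReal (1 / (1 - (2 : ℝ) ^ (σ - α)) + 1 / (1 - (2 : ℝ) ^ (-σ))) *
        (∑' i, a i) ^ (1 - σ / α) := by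
  set C := 1 / (1 - (2 : ℝ) ^ (σ - α)) + 1 / (1 - (2 : ℝ) ^ (-σ))
  set S := ∑' i, a i
  have hα : 0 < α := hσ.trans hσα
  have hθ : 0 < 1 - σ / α := sub_pos.mpr ((div_lt_one hα).mpr hσα)
  have hC : 1 ≤ C := by
    refine le_add_of_nonneg_of_le (one_div_nonneg.mpr (sub_nonneg.mpr ?_))
      (one_le_one_div_one_sub_two_rpow_neg hσ)
    exact Real.rpow_le_one_of_one_le_of_nonpos one_le_two (by linarith)
  rcases le_or_gt S 1 with hS | hS
  · calc ∑' i, a i * ENNReal.ofReal (((2 : ℝ) ^ g i)⁻¹ ^ σ) ≤ S := by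
          refine ENNReal.tsum_le_tsum fun i => mul_le_of_le_one_right' ?_
          refine ENNReal.ofReal_le_one.mpr (Real.rpow_le_one (by positivity) ?_ hσ.le)
          exact inv_le_one_of_one_le₀ (one_le_pow₀ one_le_two)
      _ ≤ S ^ (1 - σ / α) := by
          simpa using ENNReal.rpow_le_rpow_of_exponent_ge hS (sub_le_self 1 (div_pos hσ hα).le)
      _ ≤ ENNReal.ofReal C * S ^ (1 - σ / α) :=
          le_mul_of_one_le_left' (ENNReal.one_le_ofReal.mpr hC)
  rcases eq_or_ne S ⊤ with hS' | hS'
  · rw [hS', ENNReal.top_rpow_of_pos hθ, ENNReal.mul_top (by simp; linarith)]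
    exact le_top
  obtain ⟨s, hSs⟩ : ∃ s, S = ENNReal.ofReal s := ⟨S.toReal, (ENNReal.ofReal_toReal hS').symm⟩
  rw [hSs, ENNReal.one_lt_ofReal] at hS
  have hs : 0 < s := one_pos.trans hS
  obtain ⟨n, hn, hn'⟩ :=
    exists_nat_pow_near (Real.one_le_rpow hS.le (by positivity) : 1 ≤ s ^ (1 / α)) one_lt_two
  calc ∑' i, a i * ENNReal.ofReal (((2 : ℝ) ^ g i)⁻¹ ^ σ)
      ≤ ENNReal.ofReal (∑ j ∈ Finset.range (n + 1), ((2 : ℝ) ^ j) ^ (α - σ)) +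
          ENNReal.ofReal (((2 : ℝ) ^ (n + 1))⁻¹ ^ σ) * S :=
        tsum_mul_inv_two_pow_rpow_le_add hg hσ.le ha (n + 1)
    _ = ENNReal.ofReal (∑ j ∈ Finset.range (n + 1), ((2 : ℝ) ^ j) ^ (α - σ) +
          ((2 : ℝ) ^ (n + 1))⁻¹ ^ σ * s) := by
        rw [hSs, ← ENNReal.ofReal_mul (by positivity),
          ← ENNReal.ofReal_add (Finset.sum_nonneg fun j _ => by positivity) (by positivity)]
    _ ≤ ENNReal.ofReal (C * s ^ (1 - σ / α)) :=
        ENNReal.ofReal_le_ofReal (geom_sum_add_tail_le hσ hσα hs hn hn')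
    _ = ENNReal.ofReal C * S ^ (1 - σ / α) := by
        rw [ENNReal.ofReal_mul (by linarith), hSs, ENNReal.ofReal_rpow_of_pos hs]

theorem tsum_mul_indicator_eq_tsum_subtype {ι X : Type*} (f : ι → ℝ≥0∞) (s : ι → Set X)
    (x : X) :
    ∑' n, f n * (s n).indicator (fun _ => 1) x = ∑' n : {n // x ∈ s n}, f n := by
  refine (tsum_congr fun n => ?_).trans (tsum_subtype {n | x ∈ s n} f).symm
  by_cases hn : x ∈ s n <;> simp [hn]

theorem statement16_general {d : ℕ} (hd : 1 ≤ d) (σ w h u : ℝ) (hσ0 : 0 < σ)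
    (hw : 0 < w) (hwh : w ≤ h) (hu : 0 < u) (hueq : 1 / u = 1 / w - σ / d)
    (υ : ℕ → ℕ) (m : ℕ → Fin d → ℤ)
    (hdist : Function.Injective fun n => (υ n, m n))
    (δ : ℕ → ℝ)
    (hF : amalgamNorm d w h (fun x =>
        ∑' n, ENNReal.ofReal (δ n) *
          (dyadicCube d (υ n) (m n)).indicator (fun _ => 1) x) ≤ 1) :
    ∀ x : Rd d,
      ∑' n, ENNReal.ofReal (δ n) * ENNReal.ofReal ((((2 : ℝ) ^ υ n)⁻¹) ^ σ) *
          (dyadicCube d (υ n) (m n)).indicator (fun _ => 1) x ≤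
        ENNReal.ofReal
            (1 / (1 - (2 : ℝ) ^ (σ - (d : ℝ) / w)) + 1 / (1 - (2 : ℝ) ^ (-σ))) *
          (∑' n, ENNReal.ofReal (δ n) *
              (dyadicCube d (υ n) (m n)).indicator (fun _ => 1) x) ^ (w / u) := by
  intro x
  have hd0 : (0 : ℝ) < d := Nat.cast_pos.mpr hd
  have hθ : w / u = 1 - σ / (d / w) := by
    rw [div_eq_mul_one_div w u, hueq]
    field_simp
  have hσα : σ < d / w := (div_lt_one (by positivity)).mp (sub_pos.mp (hθ ▸ div_pos hw hu))
  have hinj : Function.Injective fun n : {n // x ∈ dyadicCube d (υ n) (m n)} => υ n := by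
    rintro ⟨n, hn⟩ ⟨n', hn'⟩ (hυ : υ n = υ n')
    rw [hυ] at hn
    exact Subtype.ext (hdist (Prod.ext hυ (eq_of_mem_dyadicCube hn hn')))
  have hδ (n : ℕ) : ENNReal.ofReal (δ n) ≤ ENNReal.ofReal (((2 : ℝ) ^ υ n) ^ ((d : ℝ) / w)) :=
    le_two_pow_rpow_of_amalgamNorm_le_one hw (hw.trans_le hwh) hF (m := m n) fun y hy =>
      (ENNReal.le_tsum n).trans' (by simp [hy])
  rw [tsum_mul_indicator_eq_tsum_subtype, tsum_mul_indicator_eq_tsum_subtype, hθ]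
  exact tsum_mul_inv_two_pow_rpow_le hinj hσ0 hσα fun n => hδ n

/-- Pointwise estimate in the proof of the scaling lemma, for pairwise distinct dyadic
cubes of measure at most `1` (generations `υ_m ≥ 0`, side-lengths `ℓ_m = 2^{−υ_m}`): if
`‖Σ_m δ_m χ_{Q^m}‖_{w,h} ≤ 1` then for every `x`,
`Σ_m δ_m ℓ_m^σ χ_{Q^m}(x) ≤ C (Σ_m δ_m χ_{Q^m}(x))^{w/u}` with
`C = 1/(1 − 2^{σ−d/w}) + 1/(1 − 2^{−σ})`. -/
theorem statement16 {d : ℕ} (hd : 1 ≤ d) (σ w h u : ℝ) (hσ0 : 0 < σ) (hσd : σ < d)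
    (hw : 0 < w) (hwh : w ≤ h) (hu : 0 < u) (hueq : 1 / u = 1 / w - σ / d)
    (υ : ℕ → ℕ) (m : ℕ → Fin d → ℤ)
    (hdist : Function.Injective fun n => (υ n, m n))
    (δ : ℕ → ℝ) (hδ : ∀ n, 0 ≤ δ n)
    (hF : amalgamNorm d w h (fun x =>
        ∑' n, ENNReal.ofReal (δ n) *
          (dyadicCube d (υ n) (m n)).indicator (fun _ => 1) x) ≤ 1) :
    ∀ x : Rd d,
      ∑' n, ENNReal.ofReal (δ n) * ENNReal.ofReal ((((2 : ℝ) ^ υ n)⁻¹) ^ σ) *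
          (dyadicCube d (υ n) (m n)).indicator (fun _ => 1) x ≤
        ENNReal.ofReal
            (1 / (1 - (2 : ℝ) ^ (σ - (d : ℝ) / w)) + 1 / (1 - (2 : ℝ) ^ (-σ))) *
          (∑' n, ENNReal.ofReal (δ n) *
              (dyadicCube d (υ n) (m n)).indicator (fun _ => 1) x) ^ (w / u) :=
  statement16_general hd σ w h u hσ0 hw hwh hu hueq υ m hdist δ hF
end
end
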